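/- Let (X, 𝓑, μ) be a probability space, T : X → X invertible, measure-preserving, ergodic, and C : X × ℤ → GL(m,ℝ) a measurable cocycle satisfying a distributional limit theorem on (X × ℙℝ^m, μ⊗ν) with limiting distribution S and normalizing sequence 𝒱. Let s : X → ℝ^m be a measurable (C,𝒱)-generic section, i.e., |σ(x, s(x), N) − σ(x, w, N)| = o_{x,w}(V_N) for μ-a.e. x and ν-a.e. w. Then the random variables S_N(x) = (σ(x, s(x), N) − A_N)/V_N on (X, μ) converge in distribution to S: for every interval (a,b) with ℙ(S ∈ {a,b}) = 0, μ({x : S_N(x) ∈ (a,b)}) → ℙ(S ∈ (a,b)). -/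

import Mathlib

open MeasureTheory Filter Set

noncomputable instance projMeasurableSpace {m : ℕ} :
    MeasurableSpace (Projectivization ℝ (EuclideanSpace ℝ (Fin m))) :=
  Quotient.instMeasurableSpace (α := { v : EuclideanSpace ℝ (Fin m) // v ≠ 0 })

/-- Logarithmic expansion rate `σ(x,v,N) = log (‖C(x,N)v‖ / ‖v‖)` of a linear cocycle. -/
noncomputable def cocycleSigma {X : Type*} {m : ℕ}
    (C : X → ℤ → (EuclideanSpace ℝ (Fin m) ≃L[ℝ] EuclideanSpace ℝ (Fin m)))
    (x : X) (v : EuclideanSpace ℝ (Fin m)) (N : ℤ) : ℝ :=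
  Real.log (‖C x N v‖ / ‖v‖)

/-! ### Auxiliary lemmas -/

theorem cocycleSigma_smul {X : Type*} {m : ℕ}
    (C : X → ℤ → (EuclideanSpace ℝ (Fin m) ≃L[ℝ] EuclideanSpace ℝ (Fin m)))
    (x : X) (c : ℝ) (hc : c ≠ 0) (v : EuclideanSpace ℝ (Fin m)) (N : ℤ) :
    cocycleSigma C x (c • v) N = cocycleSigma C x v N := by
  unfold cocycleSigma
  rw [_root_.map_smul, norm_smul, norm_smul]
  rw [mul_div_mul_left _ _ (by simpa using hc)]

/-- A scale-invariant measurable "normalization" map on `ℝᵐ`. -/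
noncomputable def projNrm (m : ℕ) (v : EuclideanSpace ℝ (Fin m)) : EuclideanSpace ℝ (Fin m) :=
  ∑ i : Fin m,
    Set.indicator {u : EuclideanSpace ℝ (Fin m) | u i ≠ 0 ∧ ∀ j, j < i → u j = 0}
      (fun u => (u i)⁻¹ • u) v

theorem projNrm_measurable (m : ℕ) : Measurable (projNrm m) := by
  apply Finset.measurable_sum
  intro i _
  apply Measurable.indicator
  · exact (((EuclideanSpace.proj i).continuous.measurable).inv).smul measurable_id
  · have h1 : MeasurableSet {u : EuclideanSpace ℝ (Fin m) | u i ≠ 0} :=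
      ((EuclideanSpace.proj i).continuous.measurable (measurableSet_singleton 0)).compl
    have h2 : MeasurableSet {u : EuclideanSpace ℝ (Fin m) | ∀ j, j < i → u j = 0} := by
      have : {u : EuclideanSpace ℝ (Fin m) | ∀ j, j < i → u j = 0}
          = ⋂ (j : Fin m) (_ : j < i), {u | u j = 0} := by
        ext u; simp
      rw [this]
      exact MeasurableSet.iInter fun j => MeasurableSet.iInter fun _ =>
        (EuclideanSpace.proj j).continuous.measurable (measurableSet_singleton 0)
    exact h1.inter h2

theorem projNrm_eq_smul {m : ℕ} (v : EuclideanSpace ℝ (Fin m)) (hv : v ≠ 0) :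
    ∃ c : ℝ, c ≠ 0 ∧ projNrm m v = c • v := by
  classical
  have hex : ∃ i, v i ≠ 0 := by
    by_contra h
    push_neg at h
    exact hv (by ext i; simpa using h i)
  set Fs := Finset.univ.filter (fun i => v i ≠ 0) with hFs
  have hne : Fs.Nonempty := by
    obtain ⟨i, hi⟩ := hex
    exact ⟨i, by simp [hFs, hi]⟩
  set i₀ := Fs.min' hne with hi₀
  have hvi₀ : v i₀ ≠ 0 := by
    have := Fs.min'_mem hne
    simpa [hFs] using this
  have hmin : ∀ j, v j ≠ 0 → i₀ ≤ j := fun j hj => Fs.min'_le j (by simp [hFs, hj])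
  refine ⟨(v i₀)⁻¹, inv_ne_zero hvi₀, ?_⟩
  unfold projNrm
  rw [Finset.sum_eq_single_of_mem i₀ (Finset.mem_univ _)]
  · rw [Set.indicator_of_mem]
    refine ⟨hvi₀, fun j hj => ?_⟩
    by_contra hvj
    exact absurd (hmin j hvj) (not_le.mpr hj)
  · intro i _ hii
    apply Set.indicator_of_notMem
    rintro ⟨hvi, hzero⟩
    rcases lt_or_gt_of_ne hii with h | h
    · exact absurd (hmin i hvi) (not_le.mpr h)
    · exact hvi₀ (hzero i₀ h)

theorem projNrm_smul {m : ℕ} (c : ℝ) (hc : c ≠ 0) (v : EuclideanSpace ℝ (Fin m)) :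
    projNrm m (c • v) = projNrm m v := by
  unfold projNrm
  apply Finset.sum_congr rfl
  intro i _
  have hmem : (c • v) ∈ {u : EuclideanSpace ℝ (Fin m) | u i ≠ 0 ∧ ∀ j, j < i → u j = 0}
      ↔ v ∈ {u : EuclideanSpace ℝ (Fin m) | u i ≠ 0 ∧ ∀ j, j < i → u j = 0} := by
    simp only [Set.mem_setOf_eq, PiLp.smul_apply, smul_eq_mul, mul_ne_zero_iff, mul_eq_zero]
    constructor
    · rintro ⟨⟨-, h1⟩, h2⟩
      exact ⟨h1, fun j hj => (h2 j hj).resolve_left hc⟩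
    · rintro ⟨h1, h2⟩
      exact ⟨⟨hc, h1⟩, fun j hj => Or.inr (h2 j hj)⟩
  by_cases hvmem : v ∈ {u : EuclideanSpace ℝ (Fin m) | u i ≠ 0 ∧ ∀ j, j < i → u j = 0}
  · rw [Set.indicator_of_mem (hmem.mpr hvmem), Set.indicator_of_mem hvmem]
    have hceq : (c • v) i = c * v i := rfl
    rw [hceq, smul_smul]
    have hvi : v i ≠ 0 := hvmem.1
    congr 1
    field_simp
  · rw [Set.indicator_of_notMem (fun h => hvmem (hmem.mp h)),
      Set.indicator_of_notMem hvmem]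

/-- A measurable section of the projectivization (up to nonzero scaling). -/
noncomputable def projSec {m : ℕ} :
    Projectivization ℝ (EuclideanSpace ℝ (Fin m)) → EuclideanSpace ℝ (Fin m) :=
  Projectivization.lift (fun v => projNrm m v.val)
    (by
      rintro ⟨a, ha⟩ ⟨b, hb⟩ t h
      have ht : t ≠ 0 := by
        rintro rfl
        apply ha
        simpa using h
      dsimp only at h ⊢
      rw [h, projNrm_smul t ht])

theorem projSec_spec {m : ℕ} (w : Projectivization ℝ (EuclideanSpace ℝ (Fin m))) :
    ∃ c : ℝ, c ≠ 0 ∧ projSec w = c • w.rep := by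
  have key : projSec w = projNrm m w.rep := by
    conv_lhs => rw [← w.mk_rep]
    rw [projSec, Projectivization.lift_mk]
  rw [key]
  exact projNrm_eq_smul w.rep w.rep_nonzero

theorem projSec_measurable {m : ℕ} : Measurable (projSec (m := m)) := by
  have h : Measurable fun v : { v : EuclideanSpace ℝ (Fin m) // v ≠ 0 } => projNrm m v.val :=
    (projNrm_measurable m).comp measurable_subtype_coe
  exact fun s hs => h hs

theorem cocycle_apply_eq_sum {X : Type*} {m : ℕ}
    (C : X → ℤ → (EuclideanSpace ℝ (Fin m) ≃L[ℝ] EuclideanSpace ℝ (Fin m)))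
    (x : X) (u : EuclideanSpace ℝ (Fin m)) (N : ℤ) :
    C x N u = ∑ i : Fin m, u i • C x N (EuclideanSpace.single i (1 : ℝ)) := by
  classical
  conv_lhs => rw [← (EuclideanSpace.basisFun (Fin m) ℝ).sum_repr u]
  rw [map_sum]
  apply Finset.sum_congr rfl
  intro i _
  rw [_root_.map_smul, EuclideanSpace.basisFun_apply, EuclideanSpace.basisFun_repr]

theorem measurable_cocycleSigma_comp {X : Type*} {m : ℕ} {Y : Type*}
    [MeasurableSpace X] [MeasurableSpace Y]
    (C : X → ℤ → (EuclideanSpace ℝ (Fin m) ≃L[ℝ] EuclideanSpace ℝ (Fin m)))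
    (hCmeas : ∀ N : ℤ, ∀ v, Measurable fun x => C x N v) (N : ℤ)
    {g : Y → X} (hg : Measurable g)
    {u : Y → EuclideanSpace ℝ (Fin m)} (hu : Measurable u) :
    Measurable fun y => cocycleSigma C (g y) (u y) N := by
  have hA : Measurable fun y => C (g y) N (u y) := by
    have heq : (fun y => C (g y) N (u y))
        = fun y => ∑ i : Fin m, u y i • C (g y) N (EuclideanSpace.single i (1 : ℝ)) :=
      funext fun y => cocycle_apply_eq_sum C (g y) (u y) N
    rw [heq]
    apply Finset.measurable_sum
    intro i _
    exact (((EuclideanSpace.proj i).continuous.measurable).comp hu).smul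
      ((hCmeas N _).comp hg)
  unfold cocycleSigma
  have h1 : Measurable fun y => ‖C (g y) N (u y)‖ := hA.norm
  have h2 : Measurable fun y => ‖u y‖ := hu.norm
  exact Real.measurable_log.comp (h1.div h2)

theorem measurable_cocycleSigma_proj {X : Type*} [MeasurableSpace X] {m : ℕ}
    (C : X → ℤ → (EuclideanSpace ℝ (Fin m) ≃L[ℝ] EuclideanSpace ℝ (Fin m)))
    (hCmeas : ∀ N : ℤ, ∀ v, Measurable fun x => C x N v) (N : ℤ) :
    Measurable fun p : X × Projectivization ℝ (EuclideanSpace ℝ (Fin m)) =>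
      cocycleSigma C p.1 p.2.rep N := by
  have heq : (fun p : X × Projectivization ℝ (EuclideanSpace ℝ (Fin m)) =>
      cocycleSigma C p.1 p.2.rep N)
      = fun p => cocycleSigma C p.1 (projSec p.2) N := by
    funext p
    obtain ⟨c, hc, h⟩ := projSec_spec p.2
    rw [h, cocycleSigma_smul C p.1 c hc]
  rw [heq]
  exact measurable_cocycleSigma_comp C hCmeas N measurable_fst
    (projSec_measurable.comp measurable_snd)

/-- **Theorem (theo:cocycle_CCLT_sec).** Let `T` be an invertible, measure-preserving,
ergodic transformation of a probability space `(X,μ)` and `C` a measurable cocycle over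
`T` satisfying a distributional limit theorem on `(X × ℙℝᵐ, μ ⊗ ν)` with limiting law
`S` and normalizing sequence `𝒱`. Let `s : X → ℝᵐ` be a measurable `(C,𝒱)`-generic
section. Then the random variables `S_N(x) = (σ(x,s(x),N) − A_N)/V_N` on `(X,μ)`
converge in distribution to `S`. -/
theorem generic_section_DLT_cocycle
    {X : Type*} {m : ℕ} [MeasurableSpace X] (μ : Measure X) [IsProbabilityMeasure μ]
    (T : X ≃ X) (hTm : Measurable (⇑T)) (hT : Ergodic (⇑T) μ)
    (C : X → ℤ → (EuclideanSpace ℝ (Fin m) ≃L[ℝ] EuclideanSpace ℝ (Fin m)))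
    (hCmeas : ∀ N : ℤ, ∀ v, Measurable fun x => C x N v)
    (hCcocycle : ∀ᵐ x ∂μ, ∀ r s : ℤ, ∀ v, C x (r + s) v = C ((T ^ r) x) s (C x r v))
    (ν : Measure (Projectivization ℝ (EuclideanSpace ℝ (Fin m))))
    [IsProbabilityMeasure ν]
    (A : ℕ → ℝ) (V : ℕ → ℝ) (hVpos : ∀ N, 0 < V N) (hV : Tendsto V atTop atTop)
    (S : Measure ℝ) [IsProbabilityMeasure S]
    (hDLT : ∀ a b : ℝ, S ({a, b} : Set ℝ) = 0 →
      Tendsto (fun N : ℕ =>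
          (μ.prod ν) {p | (cocycleSigma C p.1 p.2.rep (N : ℤ) - A N) / V N ∈ Ioo a b})
        atTop (nhds (S (Ioo a b))))
    (s : X → EuclideanSpace ℝ (Fin m)) (hsm : Measurable s) (hs0 : ∀ x, s x ≠ 0)
    (hgen : ∀ᵐ x ∂μ, ∀ᵐ w ∂ν,
      Tendsto (fun N : ℕ =>
        |cocycleSigma C x (s x) (N : ℤ) - cocycleSigma C x w.rep (N : ℤ)| / V N)
        atTop (nhds 0)) :
    ∀ a b : ℝ, S ({a, b} : Set ℝ) = 0 →
      Tendsto (fun N : ℕ =>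
          μ {x | (cocycleSigma C x (s x) (N : ℤ) - A N) / V N ∈ Ioo a b})
        atTop (nhds (S (Ioo a b))) := by
  classical
  intro a b hab
  -- measurability of the difference functions on the product space
  have hΔm : ∀ N : ℕ, Measurable fun p : X × Projectivization ℝ (EuclideanSpace ℝ (Fin m)) =>
      (cocycleSigma C p.1 (s p.1) (N : ℤ) - cocycleSigma C p.1 p.2.rep (N : ℤ)) / V N :=
    fun N =>
      ((measurable_cocycleSigma_comp C hCmeas N measurable_fst (hsm.comp measurable_fst)).sub
        (measurable_cocycleSigma_proj C hCmeas N)).div measurable_const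
  -- a.e. convergence of the differences on the product space
  have haep : ∀ᵐ p ∂(μ.prod ν), Tendsto (fun N : ℕ =>
      (cocycleSigma C p.1 (s p.1) (N : ℤ) - cocycleSigma C p.1 p.2.rep (N : ℤ)) / V N)
      atTop (nhds 0) := by
    rw [Measure.ae_prod_iff_ae_ae (by exact measurableSet_tendsto (nhds 0) hΔm)]
    filter_upwards [hgen] with x hx
    filter_upwards [hx] with w hw
    refine squeeze_zero_norm (fun N => le_of_eq ?_) hw
    rw [Real.norm_eq_abs, abs_div, abs_of_pos (hVpos N)]
  -- convergence in measure of the differences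
  have hTIM : ∀ ε : ℝ, 0 < ε → Tendsto (fun N : ℕ => (μ.prod ν)
      {p : X × Projectivization ℝ (EuclideanSpace ℝ (Fin m)) | ε ≤
        dist ((cocycleSigma C p.1 (s p.1) (N : ℤ) - cocycleSigma C p.1 p.2.rep (N : ℤ)) / V N) 0})
      atTop (nhds 0) := by
    intro ε hε
    have htim := tendstoInMeasure_of_tendsto_ae (μ := μ.prod ν)
      (f := fun (N : ℕ) p =>
        (cocycleSigma C p.1 (s p.1) (N : ℤ) - cocycleSigma C p.1 p.2.rep (N : ℤ)) / V N)
      (g := fun _ => (0 : ℝ))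
      (fun N => (hΔm N).aestronglyMeasurable) haep
    exact tendstoInMeasure_iff_dist.mp htim ε hε
  -- the set of atoms of S is countable
  have hatoms : Set.Countable {t : ℝ | S {t} ≠ 0} := by
    have h := MeasureTheory.Measure.countable_meas_level_set_pos (μ := S)
      (g := fun t : ℝ => t) measurable_id
    refine h.mono ?_
    intro t ht
    simp only [Set.mem_setOf_eq]
    have heq : {a : ℝ | a = t} = {t} := by ext; simp
    rw [heq]
    exact pos_iff_ne_zero.mpr ht
  have hpair : ∀ u v : ℝ, S {u} = 0 → S {v} = 0 → S ({u, v} : Set ℝ) = 0 := by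
    intro u v hu hv
    refine le_antisymm ?_ zero_le
    calc S ({u, v} : Set ℝ) = S ({u} ∪ {v}) := by rw [Set.singleton_union]
      _ ≤ S {u} + S {v} := measure_union_le _ _
      _ = 0 := by rw [hu, hv, add_zero]
  -- good epsilons exist below every threshold
  have hgood : ∀ δ : ℝ, 0 < δ → ∃ ε : ℝ, 0 < ε ∧ ε < δ ∧
      S {a + ε} = 0 ∧ S {b - ε} = 0 ∧ S {a - ε} = 0 ∧ S {b + ε} = 0 := by
    intro δ hδ
    have hbadc : Set.Countable {ε : ℝ | S {a + ε} ≠ 0 ∨ S {b - ε} ≠ 0 ∨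
        S {a - ε} ≠ 0 ∨ S {b + ε} ≠ 0} := by
      have h1 : Set.Countable ((fun ε : ℝ => a + ε) ⁻¹' {t | S {t} ≠ 0}) :=
        hatoms.preimage (add_right_injective a)
      have h2 : Set.Countable ((fun ε : ℝ => b - ε) ⁻¹' {t | S {t} ≠ 0}) :=
        hatoms.preimage (fun x y h => by have h' : b - x = b - y := h; linarith)
      have h3 : Set.Countable ((fun ε : ℝ => a - ε) ⁻¹' {t | S {t} ≠ 0}) :=
        hatoms.preimage (fun x y h => by have h' : a - x = a - y := h; linarith)
      have h4 : Set.Countable ((fun ε : ℝ => b + ε) ⁻¹' {t | S {t} ≠ 0}) :=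
        hatoms.preimage (add_right_injective b)
      have hun : {ε : ℝ | S {a + ε} ≠ 0 ∨ S {b - ε} ≠ 0 ∨ S {a - ε} ≠ 0 ∨ S {b + ε} ≠ 0}
          = ((fun ε : ℝ => a + ε) ⁻¹' {t | S {t} ≠ 0}) ∪
            ((fun ε : ℝ => b - ε) ⁻¹' {t | S {t} ≠ 0}) ∪
            ((fun ε : ℝ => a - ε) ⁻¹' {t | S {t} ≠ 0}) ∪
            ((fun ε : ℝ => b + ε) ⁻¹' {t | S {t} ≠ 0}) := by
        ext ε
        simp only [Set.mem_setOf_eq, Set.mem_union, Set.mem_preimage]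
        tauto
      rw [hun]
      exact ((h1.union h2).union h3).union h4
    have hsub : ¬ (Ioo (0 : ℝ) δ ⊆ {ε : ℝ | S {a + ε} ≠ 0 ∨ S {b - ε} ≠ 0 ∨
        S {a - ε} ≠ 0 ∨ S {b + ε} ≠ 0}) := by
      intro hsub
      have hc : (Ioo (0 : ℝ) δ).Countable := hbadc.mono hsub
      have hmk := Cardinal.mk_Ioo_real hδ
      have := hc.le_aleph0
      rw [hmk] at this
      exact absurd this (not_le.mpr Cardinal.aleph0_lt_continuum)
    obtain ⟨ε, hεI, hεbad⟩ := not_subset.mp hsub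
    simp only [Set.mem_setOf_eq, not_or, ne_eq, not_not] at hεbad
    exact ⟨ε, hεI.1, hεI.2, hεbad.1, hεbad.2.1, hεbad.2.2.1, hεbad.2.2.2⟩
  -- the boundary has zero mass
  have hIcc : S (Icc a b) = S (Ioo a b) := by
    refine le_antisymm ?_ (measure_mono Ioo_subset_Icc_self)
    calc S (Icc a b) ≤ S (Ioo a b ∪ {a, b}) := by
          apply measure_mono
          intro x hx
          by_cases hxa : x = a
          · right; simp [hxa]
          by_cases hxb : x = b
          · right; simp [hxb]
          left; exact ⟨lt_of_le_of_ne hx.1 (Ne.symm hxa), lt_of_le_of_ne hx.2 hxb⟩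
      _ ≤ S (Ioo a b) + S {a, b} := measure_union_le _ _
      _ = S (Ioo a b) := by rw [hab, add_zero]
  -- inner approximation
  have hSlim1 : Tendsto (fun k : ℕ => (S (Ioo (a + 1/((k:ℝ)+1)) (b - 1/((k:ℝ)+1)))).toReal)
      atTop (nhds (S (Ioo a b)).toReal) := by
    have hmono : Monotone fun k : ℕ => Ioo (a + 1/((k:ℝ)+1)) (b - 1/((k:ℝ)+1)) := by
      intro k l hkl
      have h1 : 1/((l:ℝ)+1) ≤ 1/((k:ℝ)+1) := by
        apply one_div_le_one_div_of_le
        · positivity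
        · have : (k:ℝ) ≤ (l:ℝ) := Nat.cast_le.mpr hkl
          linarith
      exact Ioo_subset_Ioo (by linarith) (by linarith)
    have hU : ⋃ k : ℕ, Ioo (a + 1/((k:ℝ)+1)) (b - 1/((k:ℝ)+1)) = Ioo a b := by
      ext x
      simp only [mem_iUnion, mem_Ioo]
      constructor
      · rintro ⟨k, h1, h2⟩
        have hk : 0 < 1/((k:ℝ)+1) := by positivity
        exact ⟨by linarith, by linarith⟩
      · rintro ⟨h1, h2⟩
        obtain ⟨k, hk⟩ := exists_nat_one_div_lt (lt_min_iff.mpr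
          ⟨sub_pos.mpr h1, sub_pos.mpr h2⟩)
        have hk2 := lt_min_iff.mp hk
        exact ⟨k, by linarith [hk2.1], by linarith [hk2.2]⟩
    have h := tendsto_measure_iUnion_atTop (μ := S) hmono
    rw [hU] at h
    exact (ENNReal.tendsto_toReal (measure_ne_top _ _)).comp h
  -- outer approximation
  have hSlim2 : Tendsto (fun k : ℕ => (S (Ioo (a - 1/((k:ℝ)+1)) (b + 1/((k:ℝ)+1)))).toReal)
      atTop (nhds (S (Ioo a b)).toReal) := by
    have hanti : Antitone fun k : ℕ => Ioo (a - 1/((k:ℝ)+1)) (b + 1/((k:ℝ)+1)) := by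
      intro k l hkl
      have h1 : 1/((l:ℝ)+1) ≤ 1/((k:ℝ)+1) := by
        apply one_div_le_one_div_of_le
        · positivity
        · have : (k:ℝ) ≤ (l:ℝ) := Nat.cast_le.mpr hkl
          linarith
      exact Ioo_subset_Ioo (by linarith) (by linarith)
    have hI : ⋂ k : ℕ, Ioo (a - 1/((k:ℝ)+1)) (b + 1/((k:ℝ)+1)) = Icc a b := by
      ext x
      simp only [mem_iInter, mem_Ioo, mem_Icc]
      constructor
      · intro h
        constructor
        · by_contra hc
          push_neg at hc
          obtain ⟨k, hk⟩ := exists_nat_one_div_lt (sub_pos.mpr hc)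
          linarith [(h k).1]
        · by_contra hc
          push_neg at hc
          obtain ⟨k, hk⟩ := exists_nat_one_div_lt (sub_pos.mpr hc)
          linarith [(h k).2]
      · rintro ⟨h1, h2⟩ k
        have hk : 0 < 1/((k:ℝ)+1) := by positivity
        exact ⟨by linarith, by linarith⟩
    have h := tendsto_measure_iInter_atTop (μ := S)
      (fun k => measurableSet_Ioo.nullMeasurableSet) hanti ⟨0, measure_ne_top _ _⟩
    rw [hI, hIcc] at h
    exact (ENNReal.tendsto_toReal (measure_ne_top _ _)).comp h
  -- conclude via an ε-δ argument in the reals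
  rw [← ENNReal.tendsto_toReal_iff (fun N => measure_ne_top _ _) (measure_ne_top _ _)]
  rw [Metric.tendsto_atTop]
  intro δ hδ
  have hδ4 : 0 < δ/4 := by linarith
  obtain ⟨k1, hk1⟩ := Metric.tendsto_atTop.mp hSlim1 (δ/4) hδ4
  obtain ⟨k2, hk2⟩ := Metric.tendsto_atTop.mp hSlim2 (δ/4) hδ4
  set k := max k1 k2 with hkdef
  set η := 1/((k:ℝ)+1) with hηdef
  have hη0 : 0 < η := by positivity
  obtain ⟨ε, hε0, hεη, hg1, hg2, hg3, hg4⟩ := hgood η hη0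
  -- inner and outer values are within δ/4 of the limit
  have hin : (S (Ioo a b)).toReal - δ/4 < (S (Ioo (a+ε) (b-ε))).toReal := by
    have h := hk1 k (le_max_left _ _)
    rw [Real.dist_eq] at h
    have hmon : (S (Ioo (a+η) (b-η))).toReal ≤ (S (Ioo (a+ε) (b-ε))).toReal :=
      ENNReal.toReal_mono (measure_ne_top _ _)
        (measure_mono (Ioo_subset_Ioo (by linarith) (by linarith)))
    have h2 := abs_sub_lt_iff.mp h
    linarith [h2.1, h2.2]
  have hout : (S (Ioo (a-ε) (b+ε))).toReal < (S (Ioo a b)).toReal + δ/4 := by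
    have h := hk2 k (le_max_right _ _)
    rw [Real.dist_eq] at h
    have hmon : (S (Ioo (a-ε) (b+ε))).toReal ≤ (S (Ioo (a-η) (b+η))).toReal :=
      ENNReal.toReal_mono (measure_ne_top _ _)
        (measure_mono (Ioo_subset_Ioo (by linarith) (by linarith)))
    have h2 := abs_sub_lt_iff.mp h
    linarith [h2.1, h2.2]
  -- the DLT at the shifted levels
  have hD1 := hDLT (a+ε) (b-ε) (hpair _ _ hg1 hg2)
  have hD2 := hDLT (a-ε) (b+ε) (hpair _ _ hg3 hg4)
  have hD1r : Tendsto (fun N : ℕ =>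
      ((μ.prod ν) {p | (cocycleSigma C p.1 p.2.rep (N : ℤ) - A N) / V N ∈
        Ioo (a+ε) (b-ε)}).toReal) atTop (nhds (S (Ioo (a+ε) (b-ε))).toReal) :=
    (ENNReal.tendsto_toReal (measure_ne_top _ _)).comp hD1
  have hD2r : Tendsto (fun N : ℕ =>
      ((μ.prod ν) {p | (cocycleSigma C p.1 p.2.rep (N : ℤ) - A N) / V N ∈
        Ioo (a-ε) (b+ε)}).toReal) atTop (nhds (S (Ioo (a-ε) (b+ε))).toReal) :=
    (ENNReal.tendsto_toReal (measure_ne_top _ _)).comp hD2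
  have hE1 : ∀ᶠ N : ℕ in atTop, (S (Ioo (a+ε) (b-ε))).toReal - δ/4 <
      ((μ.prod ν) {p | (cocycleSigma C p.1 p.2.rep (N : ℤ) - A N) / V N ∈
        Ioo (a+ε) (b-ε)}).toReal := by
    obtain ⟨N1, hN1⟩ := Metric.tendsto_atTop.mp hD1r (δ/4) hδ4
    refine eventually_atTop.mpr ⟨N1, fun n hn => ?_⟩
    have h := hN1 n hn
    rw [Real.dist_eq] at h
    have h2 := abs_sub_lt_iff.mp h
    linarith [h2.2]
  have hE2 : ∀ᶠ N : ℕ in atTop,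
      ((μ.prod ν) {p | (cocycleSigma C p.1 p.2.rep (N : ℤ) - A N) / V N ∈
        Ioo (a-ε) (b+ε)}).toReal < (S (Ioo (a-ε) (b+ε))).toReal + δ/4 := by
    obtain ⟨N2, hN2⟩ := Metric.tendsto_atTop.mp hD2r (δ/4) hδ4
    refine eventually_atTop.mpr ⟨N2, fun n hn => ?_⟩
    have h := hN2 n hn
    rw [Real.dist_eq] at h
    have h2 := abs_sub_lt_iff.mp h
    linarith [h2.1]
  have hdr : Tendsto (fun N : ℕ =>
      ((μ.prod ν) {p : X × Projectivization ℝ (EuclideanSpace ℝ (Fin m)) | ε ≤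
        dist ((cocycleSigma C p.1 (s p.1) (N : ℤ) - cocycleSigma C p.1 p.2.rep (N : ℤ)) / V N) 0}).toReal)
      atTop (nhds (0 : ℝ)) := by
    have h0 := (ENNReal.tendsto_toReal ENNReal.zero_ne_top).comp (hTIM ε hε0)
    simpa [Function.comp_def] using h0
  have hE3 : ∀ᶠ N : ℕ in atTop,
      ((μ.prod ν) {p : X × Projectivization ℝ (EuclideanSpace ℝ (Fin m)) | ε ≤
        dist ((cocycleSigma C p.1 (s p.1) (N : ℤ) - cocycleSigma C p.1 p.2.rep (N : ℤ)) / V N) 0}).toReal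
        < δ/4 := by
    obtain ⟨N3, hN3⟩ := Metric.tendsto_atTop.mp hdr (δ/4) hδ4
    refine eventually_atTop.mpr ⟨N3, fun n hn => ?_⟩
    have h := hN3 n hn
    rw [Real.dist_eq] at h
    simp only [ENNReal.toReal_zero, sub_zero] at h
    calc ((μ.prod ν) _).toReal ≤ |((μ.prod ν) _).toReal| := le_abs_self _
      _ < δ/4 := h
  have key : ∀ᶠ N : ℕ in atTop,
      dist ((μ {x | (cocycleSigma C x (s x) (N : ℤ) - A N) / V N ∈ Ioo a b}).toReal)
        (S (Ioo a b)).toReal < δ := by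
    filter_upwards [hE1, hE2, hE3] with N h1 h2 h3
    -- the two measure inequalities
    have hprodEq : (μ.prod ν)
        ({x | (cocycleSigma C x (s x) (N : ℤ) - A N) / V N ∈ Ioo a b} ×ˢ
          (univ : Set (Projectivization ℝ (EuclideanSpace ℝ (Fin m)))))
        = μ {x | (cocycleSigma C x (s x) (N : ℤ) - A N) / V N ∈ Ioo a b} := by
      rw [Measure.prod_prod, measure_univ, mul_one]
    have hup : μ {x | (cocycleSigma C x (s x) (N : ℤ) - A N) / V N ∈ Ioo a b} ≤
        (μ.prod ν) {p | (cocycleSigma C p.1 p.2.rep (N : ℤ) - A N) / V N ∈ Ioo (a-ε) (b+ε)} +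
        (μ.prod ν) {p : X × Projectivization ℝ (EuclideanSpace ℝ (Fin m)) | ε ≤
          dist ((cocycleSigma C p.1 (s p.1) (N : ℤ) - cocycleSigma C p.1 p.2.rep (N : ℤ)) / V N) 0} := by
      rw [← hprodEq]
      refine le_trans (measure_mono ?_) (measure_union_le _ _)
      rintro ⟨x, w⟩ ⟨hx, -⟩
      by_cases hdp : ε ≤
          dist ((cocycleSigma C x (s x) (N : ℤ) - cocycleSigma C x w.rep (N : ℤ)) / V N) 0
      · exact Or.inr hdp
      · left
        push_neg at hdp
        rw [Real.dist_eq, sub_zero] at hdp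
        have habs := abs_lt.mp hdp
        have hdiff : (cocycleSigma C x (s x) (N : ℤ) - A N) / V N -
            (cocycleSigma C x w.rep (N : ℤ) - A N) / V N
            = (cocycleSigma C x (s x) (N : ℤ) - cocycleSigma C x w.rep (N : ℤ)) / V N := by
          rw [div_sub_div_same]
          congr 1
          ring
        obtain ⟨hx1, hx2⟩ := hx
        constructor
        · linarith [habs.1, habs.2, hdiff]
        · linarith [habs.1, habs.2, hdiff]
    have hdown : (μ.prod ν)
        {p | (cocycleSigma C p.1 p.2.rep (N : ℤ) - A N) / V N ∈ Ioo (a+ε) (b-ε)} ≤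
        μ {x | (cocycleSigma C x (s x) (N : ℤ) - A N) / V N ∈ Ioo a b} +
        (μ.prod ν) {p : X × Projectivization ℝ (EuclideanSpace ℝ (Fin m)) | ε ≤
          dist ((cocycleSigma C p.1 (s p.1) (N : ℤ) - cocycleSigma C p.1 p.2.rep (N : ℤ)) / V N) 0} := by
      conv_rhs => rw [← hprodEq]
      refine le_trans (measure_mono ?_) (measure_union_le _ _)
      rintro ⟨x, w⟩ hp
      by_cases hdp : ε ≤
          dist ((cocycleSigma C x (s x) (N : ℤ) - cocycleSigma C x w.rep (N : ℤ)) / V N) 0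
      · exact Or.inr hdp
      · left
        push_neg at hdp
        rw [Real.dist_eq, sub_zero] at hdp
        have habs := abs_lt.mp hdp
        have hdiff : (cocycleSigma C x (s x) (N : ℤ) - A N) / V N -
            (cocycleSigma C x w.rep (N : ℤ) - A N) / V N
            = (cocycleSigma C x (s x) (N : ℤ) - cocycleSigma C x w.rep (N : ℤ)) / V N := by
          rw [div_sub_div_same]
          congr 1
          ring
        obtain ⟨hp1, hp2⟩ := hp
        refine ⟨?_, mem_univ _⟩
        constructor
        · linarith [habs.1, habs.2, hdiff]
        · linarith [habs.1, habs.2, hdiff]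
    -- convert to real inequalities
    have hupr : (μ {x | (cocycleSigma C x (s x) (N : ℤ) - A N) / V N ∈ Ioo a b}).toReal ≤
        ((μ.prod ν) {p | (cocycleSigma C p.1 p.2.rep (N : ℤ) - A N) / V N ∈ Ioo (a-ε) (b+ε)}).toReal +
        ((μ.prod ν) {p : X × Projectivization ℝ (EuclideanSpace ℝ (Fin m)) | ε ≤
          dist ((cocycleSigma C p.1 (s p.1) (N : ℤ) - cocycleSigma C p.1 p.2.rep (N : ℤ)) / V N) 0}).toReal := by
      have h := ENNReal.toReal_mono (by
        exact ENNReal.add_ne_top.mpr ⟨measure_ne_top _ _, measure_ne_top _ _⟩) hup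
      rwa [ENNReal.toReal_add (measure_ne_top _ _) (measure_ne_top _ _)] at h
    have hdownr : ((μ.prod ν)
        {p | (cocycleSigma C p.1 p.2.rep (N : ℤ) - A N) / V N ∈ Ioo (a+ε) (b-ε)}).toReal ≤
        (μ {x | (cocycleSigma C x (s x) (N : ℤ) - A N) / V N ∈ Ioo a b}).toReal +
        ((μ.prod ν) {p : X × Projectivization ℝ (EuclideanSpace ℝ (Fin m)) | ε ≤
          dist ((cocycleSigma C p.1 (s p.1) (N : ℤ) - cocycleSigma C p.1 p.2.rep (N : ℤ)) / V N) 0}).toReal := by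
      have h := ENNReal.toReal_mono (by
        exact ENNReal.add_ne_top.mpr ⟨measure_ne_top _ _, measure_ne_top _ _⟩) hdown
      rwa [ENNReal.toReal_add (measure_ne_top _ _) (measure_ne_top _ _)] at h
    rw [Real.dist_eq, abs_sub_lt_iff]
    constructor
    · linarith [h2, h3, hupr, hout]
    · linarith [h1, h3, hdownr, hin]
  exact eventually_atTop.mp key
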